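/- arXiv:1703.08092 — 4 statements merged into one kernel-verified Lean document; each statement's English description precedes it below -/
import Mathlib

section
/- Let N ≥ 1 and let X : ℝ → Matrix (Fin N) (Fin N) ℝ be differentiable and B : ℝ → Matrix (Fin N) (Fin N) ℝ be continuous, and suppose X satisfies the Lax-pair equation X'(t) = X(t)·B(t) − B(t)·X(t) for all t ∈ ℝ. Then the flow is isospectral: the characteristic polynomial of X(t) is the same for all t ∈ ℝ (equivalently, spec(X(t)) = spec(X(0)) for all t). -/
/-!
Jacobi's formula gives `d/dt det (c - X t) = tr (adj (c - X t) * (B t * X t - X t * B t))`.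
The adjugate of `c - X t` commutes with `X t`, so by cyclicity of the trace this derivative
vanishes. Hence every value `χ_{X t}(c) = det (c - X t)` of the characteristic polynomial is
constant in `t`, and so are the polynomial and its set of roots, the spectrum.
-/

open Polynomial

namespace Matrix

variable {n : Type*} [Fintype n]

theorem trace_mul_commutator_eq_zero_of_commute {R : Type*} [CommRing R] {K A : Matrix n n R}
    (B : Matrix n n R) (h : Commute K A) : (K * (A * B - B * A)).trace = 0 := by
  rw [Matrix.mul_sub, trace_sub, ← Matrix.mul_assoc, ← Matrix.mul_assoc,
    trace_mul_comm (K * B) A, ← Matrix.mul_assoc, ← h.eq, sub_self]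

variable [DecidableEq n]

/-- The identity holds for the generic matrix `charmatrix (-M)`, whose determinant is monic and
hence cancellable; evaluating at `0` specializes it to `M`. -/
theorem commute_adjugate_of_commute {R : Type*} [CommRing R] {A M : Matrix n n R}
    (h : Commute A M) : Commute A (adjugate M) := by
  set N := charmatrix (-M)
  set A' := (C : R →+* R[X]).mapMatrix A
  have hN : Commute A' N :=
    (scalar_commute X (Commute.all X) A').symm.sub_right (h.neg_right.map C.mapMatrix)
  have hreg : IsLeftRegular N.det := (charpoly_monic (-M)).isRegular.left
  have hN' : Commute A' (adjugate N) := hreg.matrix <| by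
    calc N.det • (A' * adjugate N) = adjugate N * N * A' * adjugate N := by
          rw [adjugate_mul, smul_mul, one_mul, smul_mul]
      _ = adjugate N * A' * (N * adjugate N) := by
          rw [mul_assoc _ N, ← hN.eq]; simp only [mul_assoc]
      _ = N.det • (adjugate N * A') := by rw [mul_adjugate, Matrix.mul_smul, mul_one]
  have hA : (evalRingHom 0).mapMatrix A' = A := by ext; simp [A']
  have hM : (evalRingHom 0).mapMatrix N = M := by
    ext i j
    by_cases hij : i = j
    · subst hij; simp [N]
    · simp [N, charmatrix_apply_ne _ _ _ hij]
  simpa only [hA, RingHom.map_adjugate, hM] using hN'.map (evalRingHom 0).mapMatrix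

theorem det_updateRow_eq_sum_mul_adjugate {R : Type*} [CommRing R] (A : Matrix n n R) (i : n)
    (v : n → R) : (A.updateRow i v).det = ∑ j, v j * adjugate A j i := by
  rw [← det_transpose, ← updateCol_transpose, ← cramer_apply, cramer_eq_adjugate_mulVec,
    ← adjugate_transpose]
  simp [mulVec, dotProduct, mul_comm]

section Calculus

variable {𝕜 : Type*} [NontriviallyNormedField 𝕜]

def detRowContinuousMultilinear : ContinuousMultilinearMap 𝕜 (fun _ : n => n → 𝕜) 𝕜 :=
  { (detRowAlternating : (n → 𝕜) [⋀^n]→ₗ[𝕜] 𝕜).toMultilinearMap with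
    cont := continuous_id.matrix_det }

theorem hasDerivAt_det {M : 𝕜 → Matrix n n 𝕜} {M' : Matrix n n 𝕜} {t : 𝕜}
    (h : ∀ i j, HasDerivAt (fun s => M s i j) (M' i j) t) :
    HasDerivAt (fun s => (M s).det) (adjugate (M t) * M').trace t := by
  have hM : HasDerivAt (fun s => (M s : n → n → 𝕜)) M' t :=
    hasDerivAt_pi.2 fun i => hasDerivAt_pi.2 fun j => h i j
  refine ((detRowContinuousMultilinear.hasFDerivAt (M t)).comp_hasDerivAt t hM).congr_deriv ?_
  refine (ContinuousMultilinearMap.linearDeriv_apply _ _ _).trans ?_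
  change ∑ i, ((M t).updateRow i (M' i)).det = _
  simp_rw [det_updateRow_eq_sum_mul_adjugate, trace, diag, mul_apply, mul_comm (M' _ _)]
  exact Finset.sum_comm

def IsLaxPair (X B : 𝕜 → Matrix n n 𝕜) : Prop :=
  ∀ t i j, HasDerivAt (fun s => X s i j) ((X t * B t - B t * X t) i j) t

theorem IsLaxPair.hasDerivAt_det_scalar_sub {X B : 𝕜 → Matrix n n 𝕜} (hX : IsLaxPair X B)
    (c t : 𝕜) : HasDerivAt (fun s => (scalar n c - X s).det) 0 t := by
  have hsub : ∀ i j, HasDerivAt (fun s => (scalar n c - X s) i j)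
      ((-(X t * B t - B t * X t)) i j) t := fun i j => (hX t i j).const_sub _
  have hcomm : Commute (adjugate (scalar n c - X t)) (X t) :=
    (commute_adjugate_of_commute ((scalar_commute c (Commute.all c) (X t)).symm.sub_right
      (Commute.refl _))).symm
  simpa only [Matrix.mul_neg, trace_neg, trace_mul_commutator_eq_zero_of_commute _ hcomm,
    neg_zero] using hasDerivAt_det hsub

end Calculus

theorem IsLaxPair.charpoly_eq {𝕜 : Type*} [RCLike 𝕜] {X B : 𝕜 → Matrix n n 𝕜}
    (hX : IsLaxPair X B) (t s : 𝕜) : (X t).charpoly = (X s).charpoly := by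
  refine Polynomial.funext fun c => ?_
  have hdet := hX.hasDerivAt_det_scalar_sub c
  simpa only [eval_charpoly] using
    is_const_of_deriv_eq_zero (fun s => (hdet s).differentiableAt) (fun s => (hdet s).deriv) t s

theorem spectrum_eq_of_charpoly_eq {K : Type*} [Field K] {A A' : Matrix n n K}
    (h : A.charpoly = A'.charpoly) : spectrum K A = spectrum K A' :=
  Set.ext fun r => by rw [mem_spectrum_iff_isRoot_charpoly, mem_spectrum_iff_isRoot_charpoly, h]

end Matrix

theorem lax_pair_isospectral_general (N : ℕ)
    (X B : ℝ → Matrix (Fin N) (Fin N) ℝ)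
    (hX : ∀ t (i j : Fin N),
      HasDerivAt (fun s => X s i j) ((X t * B t - B t * X t) i j) t) :
    (∀ t : ℝ, (X t).charpoly = (X 0).charpoly) ∧
      (∀ t : ℝ, spectrum ℝ (X t) = spectrum ℝ (X 0)) := by
  have hcharpoly (t : ℝ) : (X t).charpoly = (X 0).charpoly :=
    Matrix.IsLaxPair.charpoly_eq hX t 0
  exact ⟨hcharpoly, fun t => Matrix.spectrum_eq_of_charpoly_eq (hcharpoly t)⟩

/-- **Isospectrality of Lax-pair flows.**
If `X : ℝ → Matrix (Fin N) (Fin N) ℝ` is differentiable (entrywise, with derivative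
given by the commutator `X t * B t - B t * X t`) and `B` is continuous (entrywise),
then the characteristic polynomial of `X t` is independent of `t`; equivalently the
spectrum of `X t` equals that of `X 0` for all `t`. -/
theorem lax_pair_isospectral (N : ℕ) (hN : 1 ≤ N)
    (X B : ℝ → Matrix (Fin N) (Fin N) ℝ)
    (hX : ∀ t (i j : Fin N),
      HasDerivAt (fun s => X s i j) ((X t * B t - B t * X t) i j) t)
    (hB : ∀ i j : Fin N, Continuous fun t => B t i j) :
    (∀ t : ℝ, (X t).charpoly = (X 0).charpoly) ∧
      (∀ t : ℝ, spectrum ℝ (X t) = spectrum ℝ (X 0)) :=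
  lax_pair_isospectral_general N X B hX
end

section
/- Let N ≥ 1 and let X : ℝ → Matrix (Fin N) (Fin N) ℝ be a differentiable flow of real symmetric matrices satisfying the Toda Lax equation X'(t) = X(t)·B(X(t)) − B(X(t))·X(t), where B(Y) = Y₋ − Y₋ᵀ and Y₋ denotes the strictly lower-triangular part of Y. Then the (1,1) entry satisfies d/dt X₁₁(t) = 2 ∑_{k=2}^{N} (X_{1k}(t))² for all t; in particular t ↦ X₁₁(t) is nondecreasing. -/
open Finset Matrix

/-- The strictly lower-triangular part `Y₋` of a square matrix `Y`. -/
def strictLowerPart {N : ℕ} (Y : Matrix (Fin N) (Fin N) ℝ) : Matrix (Fin N) (Fin N) ℝ :=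
  fun i j => if (j : ℕ) < (i : ℕ) then Y i j else 0

/-- The Toda generator `B(Y) = Y₋ - Y₋ᵀ`. -/
def todaB {N : ℕ} (Y : Matrix (Fin N) (Fin N) ℝ) : Matrix (Fin N) (Fin N) ℝ :=
  strictLowerPart Y - (strictLowerPart Y)ᵀ

/-- **Monotonicity of the (1,1) entry along the Toda flow.**
If `X` is a differentiable flow of real symmetric matrices satisfying the Toda Lax
equation `X' = X·B(X) - B(X)·X`, then `d/dt X₁₁(t) = 2 ∑_{k≥2} (X_{1k}(t))²`; in
particular `t ↦ X₁₁(t)` is nondecreasing. -/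
theorem toda_first_entry_deriv (N : ℕ) (hN : 1 ≤ N)
    (X : ℝ → Matrix (Fin N) (Fin N) ℝ)
    (hsymm : ∀ t, (X t).IsSymm)
    (hX : ∀ t (i j : Fin N),
      HasDerivAt (fun s => X s i j)
        ((X t * todaB (X t) - todaB (X t) * X t) i j) t) :
    (∀ t : ℝ, HasDerivAt (fun s => X s ⟨0, hN⟩ ⟨0, hN⟩)
        (2 * ∑ k ∈ univ \ {(⟨0, hN⟩ : Fin N)}, (X t ⟨0, hN⟩ k) ^ 2) t) ∧
      Monotone fun t => X t ⟨0, hN⟩ ⟨0, hN⟩ := by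
  set z : Fin N := ⟨0, hN⟩ with hzdef
  have key : ∀ (A : Matrix (Fin N) (Fin N) ℝ), A.IsSymm →
      (A * todaB A - todaB A * A) z z = 2 * ∑ k ∈ univ \ {z}, (A z k) ^ 2 := by
    intro A hA
    have hz : ∀ k : Fin N, A z k * todaB A k z - todaB A z k * A k z
        = if k = z then 0 else 2 * (A z k) ^ 2 := by
      intro k
      by_cases hk : k = z
      · subst hk; simp [todaB, strictLowerPart]
      · have hk0 : (z : ℕ) < (k : ℕ) := by
          have : (k : ℕ) ≠ 0 := fun h => hk (Fin.ext h)
          simpa [hzdef] using Nat.pos_of_ne_zero this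
        have hsy : A k z = A z k := hA.apply z k
        simp only [todaB, strictLowerPart, Matrix.sub_apply, Matrix.transpose_apply,
          if_pos hk0, if_neg (not_lt.mpr hk0.le), hk, if_neg hk]
        rw [hsy, if_false]; ring
    have : (A * todaB A - todaB A * A) z z
        = ∑ k : Fin N, (A z k * todaB A k z - todaB A z k * A k z) := by
      simp [Matrix.sub_apply, Matrix.mul_apply, Finset.sum_sub_distrib]
    rw [this, Finset.sum_congr rfl (fun k _ => hz k)]
    rw [← Finset.sum_subset (Finset.sdiff_subset : univ \ {z} ⊆ univ)
      (by intro x _ hx; simp only [Finset.mem_sdiff, Finset.mem_univ, true_and,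
        Finset.mem_singleton, not_not] at hx; simp [hx])]
    rw [Finset.mul_sum]
    refine Finset.sum_congr rfl fun k hk => ?_
    have : k ≠ z := by
      simp only [Finset.mem_sdiff, Finset.mem_singleton] at hk; exact hk.2
    simp [this]
  have hd : ∀ t : ℝ, HasDerivAt (fun s => X s z z)
      (2 * ∑ k ∈ univ \ {z}, (X t z k) ^ 2) t := by
    intro t
    have h := hX t z z
    rwa [key (X t) (hsymm t)] at h
  refine ⟨hd, monotone_of_deriv_nonneg (fun t => (hd t).differentiableAt) fun t => ?_⟩
  rw [(hd t).deriv]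
  positivity
end

section
/- Let X be an N×N real symmetric matrix with eigenvalues λ_1 ≥ λ_2 ≥ … ≥ λ_N, let 0 ≤ ε < (λ_1 − λ_2)/2, and suppose ∑_{k=2}^{N} (X_{1k})² ≤ ε² and |X₁₁ − λ_1| < (λ_1 − λ_2)/2. Then the eigenvalue of X nearest to X₁₁ is the largest eigenvalue λ_1; in fact |X₁₁ − λ_1| ≤ ε. -/
open Finset

/-- **The computed eigenvalue is the largest one.**
Let `X` be real symmetric with weakly decreasing eigenvalues `lam 0 ≥ lam 1 ≥ …`
(given by an orthonormal eigenbasis `u`), let `0 ≤ ε < (lam 0 - lam 1)/2`, and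
suppose `∑_{k≥2} (X_{1k})² ≤ ε²` and `|X₁₁ - lam 0| < (lam 0 - lam 1)/2`.
Then the eigenvalue of `X` nearest to `X₁₁` is the largest eigenvalue `lam 0`;
in fact `|X₁₁ - lam 0| ≤ ε`. -/
theorem nearest_eigenvalue_is_largest (N : ℕ) (hN : 2 ≤ N)
    (X : Matrix (Fin N) (Fin N) ℝ) (hX : X.IsSymm)
    (lam : Fin N → ℝ) (hord : Antitone lam)
    (u : Fin N → Fin N → ℝ)
    (horth : ∀ j k : Fin N, ∑ i, u j i * u k i = if j = k then 1 else 0)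
    (heig : ∀ j : Fin N, X.mulVec (u j) = lam j • u j)
    (ε : ℝ) (hε0 : 0 ≤ ε)
    (hεgap : ε < (lam ⟨0, by omega⟩ - lam ⟨1, hN⟩) / 2)
    (hrow : ∑ k ∈ univ \ {(⟨0, by omega⟩ : Fin N)}, (X ⟨0, by omega⟩ k) ^ 2 ≤ ε ^ 2)
    (hclose : |X ⟨0, by omega⟩ ⟨0, by omega⟩ - lam ⟨0, by omega⟩| <
      (lam ⟨0, by omega⟩ - lam ⟨1, hN⟩) / 2) :
    (∀ j : Fin N, |X ⟨0, by omega⟩ ⟨0, by omega⟩ - lam ⟨0, by omega⟩| ≤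
        |X ⟨0, by omega⟩ ⟨0, by omega⟩ - lam j|) ∧
      |X ⟨0, by omega⟩ ⟨0, by omega⟩ - lam ⟨0, by omega⟩| ≤ ε := by
  have hN1 : 1 < N := by omega
  set i0 : Fin N := ⟨0, by omega⟩ with hi0def
  set i1 : Fin N := ⟨1, hN⟩ with hi1def
  set a : ℝ := X i0 i0 with hadef
  -- Part 1: the nearest eigenvalue to a is lam i0.
  have part1 : ∀ j : Fin N, |a - lam i0| ≤ |a - lam j| := by
    intro j
    by_cases hj : j = i0
    · subst hj; exact le_refl _
    · have hj1 : i1 ≤ j := by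
        have : j.val ≠ 0 := fun h => hj (Fin.ext h)
        exact Fin.mk_le_of_le_val (by omega)
      have hlj : lam j ≤ lam i1 := hord hj1
      have habs := abs_lt.mp hclose
      have h1 : |a - lam i0| < (lam i0 - lam i1) / 2 := hclose
      have h2 : (lam i0 - lam i1) / 2 ≤ a - lam j := by
        have := habs.1
        linarith
      calc |a - lam i0| ≤ (lam i0 - lam i1) / 2 := le_of_lt h1
        _ ≤ a - lam j := h2
        _ ≤ |a - lam j| := le_abs_self _
  refine ⟨part1, ?_⟩
  -- Column orthonormality
  set U : Matrix (Fin N) (Fin N) ℝ := Matrix.of u with hUdef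
  have hU : U * U.transpose = 1 := by
    ext j k
    simpa [Matrix.mul_apply, Matrix.one_apply, hUdef] using horth j k
  have hU' : U.transpose * U = 1 := mul_eq_one_comm.mp hU
  have colorth : ∀ i k : Fin N, ∑ j, u j i * u j k = if i = k then 1 else 0 := by
    intro i k
    have := congrFun (congrFun hU' i) k
    simpa [Matrix.mul_apply, Matrix.transpose_apply, Matrix.one_apply, hUdef] using this
  set c : Fin N → ℝ := fun j => u j i0 with hcdef
  have hbase : ∀ i2 : Fin N, ∑ j, c j * u j i2 = if i2 = i0 then 1 else 0 := by
    intro i2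
    have := colorth i0 i2
    calc ∑ j, c j * u j i2 = ∑ j, u j i0 * u j i2 := rfl
      _ = if i0 = i2 then 1 else 0 := this
      _ = if i2 = i0 then 1 else 0 := by simp [eq_comm]
  -- key orthonormal-expansion identity
  have key : ∀ α : Fin N → ℝ, ∑ i, (∑ j, α j * u j i) ^ 2 = ∑ j, (α j) ^ 2 := by
    intro α
    calc ∑ i, (∑ j, α j * u j i) ^ 2
        = ∑ j, ∑ k, (α j * α k) * ∑ i, u j i * u k i := by
          simp_rw [sq, Finset.sum_mul_sum, Finset.mul_sum]
          rw [Finset.sum_comm]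
          refine Finset.sum_congr rfl fun j _ => ?_
          rw [Finset.sum_comm]
          exact Finset.sum_congr rfl fun k _ => Finset.sum_congr rfl fun i _ => by ring
      _ = ∑ j, (α j) ^ 2 := by
          simp_rw [horth, mul_ite, mul_one, mul_zero]
          refine Finset.sum_congr rfl fun j _ => ?_
          simp [Finset.sum_ite_eq, sq]
  set α : Fin N → ℝ := fun j => c j * (lam j - a) with hαdef
  -- the residual expansion
  have hres : ∀ i : Fin N, ∑ j, α j * u j i = X i i0 - (if i = i0 then a else 0) := by
    intro i
    have h1 : ∀ j : Fin N, lam j * u j i = ∑ k, X i k * u j k := by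
      intro j
      have := congrFun (heig j) i
      simpa [Matrix.mulVec, dotProduct] using this.symm
    have e1 : ∑ j, α j * u j i
        = (∑ j, c j * (lam j * u j i)) - a * ∑ j, c j * u j i := by
      rw [Finset.mul_sum, ← Finset.sum_sub_distrib]
      exact Finset.sum_congr rfl fun j _ => by simp [hαdef]; ring
    have hfirst : ∑ j, c j * (lam j * u j i) = X i i0 := by
      simp_rw [h1, Finset.mul_sum]
      rw [Finset.sum_comm]
      have : ∀ k : Fin N, ∑ j, c j * (X i k * u j k) = X i k * ∑ j, c j * u j k := by
        intro k
        rw [Finset.mul_sum]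
        exact Finset.sum_congr rfl fun j _ => by ring
      simp_rw [this, hbase, mul_ite, mul_one, mul_zero]
      simp
    rw [e1, hfirst, hbase i]
    by_cases h : i = i0 <;> simp [h]
  -- evaluate the residual norm two ways
  have hsq := key α
  have hLHS : ∑ i, (∑ j, α j * u j i) ^ 2 = ∑ k ∈ univ \ {i0}, (X i0 k) ^ 2 := by
    simp_rw [hres]
    rw [Finset.sum_eq_sum_sdiff_singleton_add (Finset.mem_univ i0)
      (fun i => (X i i0 - if i = i0 then a else 0) ^ 2)]
    have h0 : (X i0 i0 - if i0 = i0 then a else 0) ^ 2 = 0 := by simp [hadef]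
    rw [h0, add_zero]
    refine Finset.sum_congr rfl fun i hi => ?_
    have hi' : i ≠ i0 := by simpa [Finset.mem_sdiff] using hi
    have hsymm : X i i0 = X i0 i := by
      have := congrFun (congrFun hX i0) i
      simpa [Matrix.transpose_apply] using this
    simp [hi', hsymm]
  have hc1 : ∑ j, (c j) ^ 2 = 1 := by
    have := colorth i0 i0
    simpa [hcdef, sq] using this
  have hRHS : (lam i0 - a) ^ 2 ≤ ∑ j, α j ^ 2 := by
    have h1 : ∀ j : Fin N, (c j) ^ 2 * (lam i0 - a) ^ 2 ≤ α j ^ 2 := by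
      intro j
      have hp := part1 j
      have hsq' : (a - lam i0) ^ 2 ≤ (a - lam j) ^ 2 := by
        nlinarith [abs_nonneg (a - lam i0), sq_abs (a - lam i0), sq_abs (a - lam j),
          abs_nonneg (a - lam j)]
      have hαj : α j ^ 2 = (c j) ^ 2 * (a - lam j) ^ 2 := by simp [hαdef]; ring
      nlinarith [sq_nonneg (c j)]
    calc (lam i0 - a) ^ 2 = ∑ j, (c j) ^ 2 * (lam i0 - a) ^ 2 := by
          rw [← Finset.sum_mul, hc1, one_mul]
      _ ≤ ∑ j, α j ^ 2 := Finset.sum_le_sum fun j _ => h1 j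
  have heq : ∑ j, α j ^ 2 = ∑ k ∈ univ \ {i0}, (X i0 k) ^ 2 := hsq.symm.trans hLHS
  have hfin : (lam i0 - a) ^ 2 ≤ ε ^ 2 := by linarith [hRHS, hrow, heq.le]
  nlinarith [sq_abs (a - lam i0), abs_nonneg (a - lam i0), hfin, hε0]
end

section
/- Fix N ≥ 1, real numbers λ_1, …, λ_N and real numbers c_1, …, c_N with ∑_{k=1}^{N} c_k² = 1, and define for t ∈ ℝ: D(t) = ∑_{k=1}^{N} c_k² e^{2λ_k t}, u_j(t) = c_j e^{λ_j t}/√D(t), and m(t) = ∑_{j=1}^{N} λ_j (u_j(t))². Then each u_j is differentiable and satisfies the ODE u_j'(t) = (λ_j − m(t)) u_j(t) with u_j(0) = c_j, and moreover ∑_{j=1}^{N} (u_j(t))² = 1 for all t. -/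
/-!
With `D t = ∑ c_k² e^{2λ_k t}`, each `u_j² = c_j² e^{2λ_j t} / D t`, so the squares sum to `1`.
Differentiating `D` gives `D' = 2 m D`, hence `(√D)' = m √D`, and the quotient rule applied to
`u_j = c_j e^{λ_j t} / √D` gives `u_j' = (λ_j - m) u_j`.
-/

open Finset Real

noncomputable section

namespace Moser

variable {ι : Type*} [Fintype ι] (lam c : ι → ℝ)

def denom (t : ℝ) : ℝ := ∑ k, c k ^ 2 * exp (2 * lam k * t)

def component (j : ι) (t : ℝ) : ℝ := c j * exp (lam j * t) / √(denom lam c t)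

def mean (t : ℝ) : ℝ := ∑ j, lam j * component lam c j t ^ 2

variable {lam c}

theorem denom_pos (hc : c ≠ 0) (t : ℝ) : 0 < denom lam c t := by
  obtain ⟨k, hk⟩ := Function.ne_iff.mp hc
  simp only [Pi.zero_apply] at hk
  exact sum_pos' (fun _ _ => by positivity) ⟨k, mem_univ k, by positivity⟩

theorem denom_zero : denom lam c 0 = ∑ k, c k ^ 2 := by
  simp [denom]

theorem hasDerivAt_denom (t : ℝ) :
    HasDerivAt (denom lam c) (∑ k, 2 * lam k * (c k ^ 2 * exp (2 * lam k * t))) t := by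
  refine (HasDerivAt.fun_sum (u := univ) fun k _ =>
    ((hasDerivAt_id t).const_mul (2 * lam k)).exp.const_mul (c k ^ 2)).congr_deriv ?_
  exact sum_congr rfl fun k _ => by simp only [id_eq, mul_one]; ring

theorem component_sq (j : ι) (t : ℝ) :
    component lam c j t ^ 2 = c j ^ 2 * exp (2 * lam j * t) / denom lam c t := by
  have hD : 0 ≤ denom lam c t := sum_nonneg fun _ _ => by positivity
  rw [component, div_pow, sq_sqrt hD, mul_pow, ← exp_nat_mul]
  ring_nf

theorem sum_component_sq (hc : c ≠ 0) (t : ℝ) : ∑ j, component lam c j t ^ 2 = 1 := by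
  simp only [component_sq, ← sum_div]
  exact div_self (denom_pos (lam := lam) hc t).ne'

theorem component_zero (hc : ∑ k, c k ^ 2 = 1) (j : ι) : component lam c j 0 = c j := by
  simp [component, denom_zero, hc]

theorem mean_mul_denom (hc : c ≠ 0) (t : ℝ) :
    mean lam c t * denom lam c t = ∑ k, lam k * (c k ^ 2 * exp (2 * lam k * t)) := by
  have hD := (denom_pos (lam := lam) hc t).ne'
  simp only [mean, sum_mul, component_sq]
  exact sum_congr rfl fun k _ => by field_simp

theorem hasDerivAt_denom_two_mul_mean (hc : c ≠ 0) (t : ℝ) :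
    HasDerivAt (denom lam c) (2 * mean lam c t * denom lam c t) t := by
  convert hasDerivAt_denom (lam := lam) (c := c) t using 1
  rw [mul_assoc, mean_mul_denom hc, mul_sum]
  exact sum_congr rfl fun k _ => by ring

theorem hasDerivAt_component (hc : c ≠ 0) (j : ι) (t : ℝ) :
    HasDerivAt (component lam c j) ((lam j - mean lam c t) * component lam c j t) t := by
  have hD := denom_pos (lam := lam) hc t
  have hsqrt : 0 < √(denom lam c t) := sqrt_pos.mpr hD
  have hnum : HasDerivAt (fun s => c j * exp (lam j * s)) (c j * (exp (lam j * t) * lam j)) t := by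
    simpa only [id_eq, mul_one] using ((hasDerivAt_id t).const_mul (lam j)).exp.const_mul (c j)
  have hden := (hasDerivAt_denom_two_mul_mean hc t).sqrt hD.ne'
  refine (hnum.div hden hsqrt.ne').congr_deriv ?_
  have hsq : √(denom lam c t) ^ 2 = denom lam c t := sq_sqrt hD.le
  rw [component]
  field_simp
  rw [hsq]
  ring

end Moser

end

theorem moser_formulas_solve_ODE_general (N : ℕ)
    (lam c : Fin N → ℝ) (hc : ∑ k, (c k) ^ 2 = 1)
    (D : ℝ → ℝ) (hD : ∀ t, D t = ∑ k, (c k) ^ 2 * Real.exp (2 * lam k * t))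
    (u : Fin N → ℝ → ℝ)
    (hu : ∀ (j : Fin N) (t : ℝ), u j t = c j * Real.exp (lam j * t) / Real.sqrt (D t))
    (m : ℝ → ℝ) (hm : ∀ t, m t = ∑ j, lam j * (u j t) ^ 2) :
    (∀ (j : Fin N) (t : ℝ), HasDerivAt (u j) ((lam j - m t) * u j t) t) ∧
      (∀ j : Fin N, u j 0 = c j) ∧
      (∀ t : ℝ, ∑ j, (u j t) ^ 2 = 1) := by
  have hc0 : c ≠ 0 := by
    rintro rfl
    simp at hc
  obtain rfl : D = Moser.denom lam c := funext hD
  obtain rfl : u = Moser.component lam c := funext fun j => funext (hu j)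
  obtain rfl : m = Moser.mean lam c := funext hm
  exact ⟨Moser.hasDerivAt_component hc0, Moser.component_zero hc, Moser.sum_component_sq hc0⟩

/-- **Moser's formulas solve the eigenvector-component ODE.**
Given `lam : Fin N → ℝ` and weights `c` with `∑ c k ^ 2 = 1`, set
`D t = ∑ k, c k ^ 2 * exp (2 lam k t)`, `u j t = c j * exp (lam j t) / √(D t)` and
`m t = ∑ j, lam j * (u j t) ^ 2`.  Then each `u j` is differentiable with
`u j ' t = (lam j - m t) * u j t`, `u j 0 = c j`, and `∑ j, (u j t)² = 1` for all `t`. -/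
theorem moser_formulas_solve_ODE (N : ℕ) (hN : 1 ≤ N)
    (lam c : Fin N → ℝ) (hc : ∑ k, (c k) ^ 2 = 1)
    (D : ℝ → ℝ) (hD : ∀ t, D t = ∑ k, (c k) ^ 2 * Real.exp (2 * lam k * t))
    (u : Fin N → ℝ → ℝ)
    (hu : ∀ (j : Fin N) (t : ℝ), u j t = c j * Real.exp (lam j * t) / Real.sqrt (D t))
    (m : ℝ → ℝ) (hm : ∀ t, m t = ∑ j, lam j * (u j t) ^ 2) :
    (∀ (j : Fin N) (t : ℝ), HasDerivAt (u j) ((lam j - m t) * u j t) t) ∧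
      (∀ j : Fin N, u j 0 = c j) ∧
      (∀ t : ℝ, ∑ j, (u j t) ^ 2 = 1) :=
  moser_formulas_solve_ODE_general N lam c hc D hD u hu m hm
end
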